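/- No tower is computably enumerable: if G ⊆ ℕ is a c.e. set such that for every n the column G_{n+1} is almost contained in G_n (G_{n+1} \ G_n is finite) and G_n \ G_{n+1} is infinite, then there exists an infinite computable set R with R \ G_n finite for every n; in particular the tower described by G is not maximal among the computable sets. -/

import Mathlib

/-!
Since `G` is c.e., so is the relation "`x` lies in the columns `G_0, …, G_n`", uniformly in `n`.
The intersections `⋂ i ≤ n, G_i` are infinite (each `G_n` is infinite and `G_{n+1} ⊆* G_n`), so a
computable search picks `p n ≥ n` in `⋂ i ≤ n, G_i`. The range of `p` is infinite, decidable
because `p n ≥ n`, and almost contained in every `G_m`: only `p 0, …, p (m - 1)` can miss `G_m`.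
-/

/-- The `n`-th column of a set of naturals. -/
def column (G : Set ℕ) (n : ℕ) : Set ℕ := {x | Nat.pair x n ∈ G}

open Nat.Partrec Encodable

theorem Set.finite_diff_biInter_le {α : Type*} {A : ℕ → Set α}
    (h : ∀ n, (A (n + 1) \ A n).Finite) (n : ℕ) : (A n \ ⋂ i ≤ n, A i).Finite := by
  induction n with
  | zero => simp
  | succ n ih =>
    refine ((h n).union ih).subset ?_
    rintro x ⟨hx, hxI⟩
    by_cases hxn : x ∈ A n
    · refine Or.inr ⟨hxn, fun hI => hxI (Set.mem_iInter₂.2 fun i hi => ?_)⟩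
      rcases Nat.of_le_succ hi with hi | rfl
      exacts [Set.mem_iInter₂.1 hI i hi, hx]
    · exact Or.inl ⟨hx, hxn⟩

theorem Set.Finite.exists_forall_of_monotone {ι β : Type*} [Preorder β]
    [IsDirected β (· ≤ ·)] [Nonempty β] {s : Set ι} (hs : s.Finite) {Q : ι → β → Prop}
    (hQ : ∀ i, Monotone (Q i)) (h : ∀ i ∈ s, ∃ b, Q i b) : ∃ b, ∀ i ∈ s, Q i b :=
  ((Filter.eventually_all_finite hs).2 fun i hi =>
    let ⟨b, hb⟩ := h i hi
    Filter.eventually_atTop.2 ⟨b, fun _ hc => hQ i hc hb⟩).exists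

namespace REPred

variable {α : Type*} [Primcodable α]

theorem comp {β : Type*} [Primcodable β] {p : β → Prop} (hp : REPred p) {f : α → β}
    (hf : Computable f) : REPred fun a => p (f a) :=
  Partrec.comp hp hf

theorem exists_stages {p : α → Prop} (hp : REPred p) :
    ∃ T : ℕ → α → Prop, PrimrecRel T ∧ (∀ a, Monotone fun s => T s a) ∧
      ∀ a, p a ↔ ∃ s, T s a := by
  obtain ⟨c, hc⟩ := Code.exists_code.1 hp
  refine ⟨fun s a => (Code.evaln s c (encode a)).isSome, ?_, ?_, fun a => ?_⟩
  · exact Primrec.eq.comp (Primrec.option_isSome.comp (Code.primrec_evaln.comp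
      ((Primrec.fst.pair (Primrec.const c)).pair (Primrec.encode.comp Primrec.snd))))
      (Primrec.const true)
  · intro a s s' hss' hs
    obtain ⟨y, hy⟩ := Option.isSome_iff_exists.1 hs
    exact Option.isSome_iff_exists.2 ⟨y, Code.evaln_mono hss' hy⟩
  · have hdom : (Code.eval c (encode a)).Dom ↔ p a := by
      simp only [hc, encodek, Part.coe_some, Part.bind_some, Part.map_Dom]
      exact ⟨fun ⟨h, _⟩ => h, fun h => ⟨h, trivial⟩⟩
    rw [← hdom, Code.eval_eq_rfindOpt, Nat.rfindOpt_dom]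
    simp [Option.isSome_iff_exists]

theorem of_stages {T : ℕ → α → Prop} (hT : ComputablePred fun q : ℕ × α => T q.1 q.2) :
    REPred fun a => ∃ s, T s a := by
  classical
  have hstage : Computable₂ fun a s => decide (T s a) :=
    hT.decide.comp (Computable.snd.pair Computable.fst)
  refine (Partrec.rfind hstage.partrec₂).dom_re.of_eq fun a => ?_
  rw [Nat.rfind_dom]
  simp

theorem forall_le {P : α → ℕ → Prop} (hP : REPred fun q : α × ℕ => P q.1 q.2) :
    REPred fun q : α × ℕ => ∀ i ≤ q.2, P q.1 i := by
  obtain ⟨T, hT, hmono, hPT⟩ := hP.exists_stages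
  have hR : PrimrecRel fun i (sa : ℕ × α) => T sa.1 (sa.2, i) :=
    hT.comp (Primrec.fst.comp Primrec.snd) ((Primrec.snd.comp Primrec.snd).pair Primrec.fst)
  let T' : ℕ → α × ℕ → Prop := fun s q => ∀ i ∈ List.range (q.2 + 1), T s (q.1, i)
  have hT' : PrimrecRel T' :=
    hR.forall_mem_list.comp
      (Primrec.list_range.comp (Primrec.succ.comp (Primrec.snd.comp Primrec.snd)))
      (Primrec.fst.pair (Primrec.fst.comp Primrec.snd))
  refine (of_stages (T := T') hT'.computablePred).of_eq fun q => ⟨?_, fun h => ?_⟩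
  · rintro ⟨s, hs⟩ i hi
    exact (hPT (q.1, i)).2 ⟨s, hs i (List.mem_range.2 (Nat.lt_succ_of_le hi))⟩
  · obtain ⟨s, hs⟩ := (Set.finite_Iic q.2).exists_forall_of_monotone (fun i => hmono (q.1, i))
      fun i hi => (hPT (q.1, i)).1 (h i hi)
    exact ⟨s, fun i hi => hs i (Nat.lt_succ_iff.1 (List.mem_range.1 hi))⟩

theorem exists_computable_choice {r : α → ℕ → Prop} (hr : REPred fun q : α × ℕ => r q.1 q.2)
    (h : ∀ a, ∃ x, r a x) : ∃ f : α → ℕ, Computable f ∧ ∀ a, r a (f a) := by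
  classical
  obtain ⟨T, hT, -, hrT⟩ := hr.exists_stages
  -- search for `t = ⟪x, s⟫` such that stage `s` confirms `r a x`
  let D : α → ℕ → Prop := fun a t => T t.unpair.2 (a, t.unpair.1)
  have hD : ComputablePred fun q : α × ℕ => D q.1 q.2 :=
    (hT.comp (Primrec.snd.comp (Primrec.unpair.comp Primrec.snd))
      (Primrec.fst.pair (Primrec.fst.comp (Primrec.unpair.comp Primrec.snd)))).computablePred
  have hex : ∀ a, ∃ t, D a t := fun a => by
    obtain ⟨x, hx⟩ := h a
    obtain ⟨s, hs⟩ := (hrT (a, x)).1 hx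
    exact ⟨Nat.pair x s, by simpa [D] using hs⟩
  exact ⟨fun a => (Nat.find (hex a)).unpair.1,
    Computable.fst.comp (Computable.unpair.comp (Computable.find hD hex)),
    fun a => (hrT (a, _)).2 ⟨_, Nat.find_spec (hex a)⟩⟩

end REPred

theorem computablePred_mem_range {p : ℕ → ℕ} (hp : Computable p) (hle : ∀ n, n ≤ p n) :
    ComputablePred (· ∈ Set.range p) := by
  classical
  -- a preimage of `x` is at most `x`, so the least `n` with `x < n ∨ p n = x` finds one if any
  have hex : ∀ x, ∃ n, x < n ∨ p n = x := fun x => ⟨x + 1, Or.inl x.lt_succ_self⟩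
  have hsearch : ComputablePred fun q : ℕ × ℕ => q.1 < q.2 ∨ p q.2 = q.1 :=
    Computable.computablePred <| (Primrec.or.to_comp.comp Primrec.nat_lt.decide.to_comp
      (Primrec.eq.decide.to_comp.comp (hp.comp Computable.snd) Computable.fst)).of_eq
      fun q => by simp
  have hfind := Computable.find hsearch hex
  refine ComputablePred.of_eq (p := fun x => p (Nat.find (hex x)) = x)
    (Computable.computablePred (Primrec.eq.decide.to_comp.comp (hp.comp hfind) Computable.id))
    fun x => ⟨fun h => ⟨_, h⟩, ?_⟩
  rintro ⟨n, rfl⟩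
  have hmin : Nat.find (hex (p n)) ≤ n := Nat.find_min' _ (Or.inr rfl)
  exact (Nat.find_spec (hex (p n))).resolve_left (by have := hle n; omega)

/-- No tower is computably enumerable: if `G` is c.e. and describes a tower, then some
infinite computable set is almost contained in every level of the tower; in particular
the tower is not maximal among the computable sets. -/
theorem no_tower_is_ce (G : Set ℕ)
    (hG : REPred (· ∈ G))
    (hnested : ∀ n, (column G (n + 1) \ column G n).Finite)
    (hdiff : ∀ n, (column G n \ column G (n + 1)).Infinite) :
    ∃ R : Set ℕ, ComputablePred (· ∈ R) ∧ R.Infinite ∧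
      ∀ n, (R \ column G n).Finite := by
  have hinf : ∀ n, (⋂ i ≤ n, column G i).Infinite := fun n hfin =>
    (hdiff n).mono Set.sdiff_subset ((Set.finite_diff_biInter_le hnested n).of_sdiff hfin)
  have hpair : REPred fun q : (ℕ × ℕ) × ℕ => Nat.pair (q.1.1 + q.1.2) q.2 ∈ G :=
    hG.comp (Primrec₂.natPair.comp (Primrec.nat_add.comp (Primrec.fst.comp Primrec.fst)
      (Primrec.snd.comp Primrec.fst)) Primrec.snd).to_comp
  have hre : REPred fun q : ℕ × ℕ => ∀ i ≤ q.1, Nat.pair (q.1 + q.2) i ∈ G :=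
    (REPred.forall_le (P := fun (q : ℕ × ℕ) (i : ℕ) => Nat.pair (q.1 + q.2) i ∈ G) hpair).comp
      (f := fun q => (q, q.1)) (Computable.id.pair Computable.fst)
  obtain ⟨f, hf, hfG⟩ := REPred.exists_computable_choice
      (r := fun n x => ∀ i ≤ n, Nat.pair (n + x) i ∈ G) hre fun n => by
    obtain ⟨x, hx, hnx⟩ := (hinf n).exists_gt n
    refine ⟨x - n, fun i hi => ?_⟩
    rw [Nat.add_sub_cancel' hnx.le]
    exact Set.mem_iInter₂.1 hx i hi
  let p : ℕ → ℕ := fun n => n + f n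
  refine ⟨Set.range p,
    computablePred_mem_range (Primrec.nat_add.to_comp.comp Computable.id hf)
      fun n => n.le_add_right _,
    Set.infinite_of_forall_exists_gt fun b => ⟨p (b + 1), ⟨b + 1, rfl⟩, by simp only [p]; omega⟩,
    fun m => ((Set.finite_Iio m).image p).subset ?_⟩
  rintro _ ⟨⟨n, rfl⟩, hn⟩
  exact ⟨n, Set.mem_Iio.2 (lt_of_not_ge fun hmn => hn (hfG n m hmn)), rfl⟩
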